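/- There exist a finite action set A = {a₀,a₁} with expected rewards μ, an abstract action set A' = {a₀',a₁'} with expected rewards μ', and a bijection α : A → A' such that for each a, the reward distribution of α(a) equals the pushforward of the reward distribution of a under some surjective outcome map (i.e. the abstraction is exact with zero interventional consistency error), yet α(argmax μ) ≠ argmax μ'. -/
import Mathlib


open Finset

/-- There exist a two-action base bandit with finitely-supported reward distributions
`p` on three outcomes with values `v`, a two-action abstract bandit with reward
distributions `q` on two outcomes with values `w`, a bijection `α` between action
sets and a surjective outcome map `αY` such that the abstraction is exact (zero IC
error: the pushforward of every base reward distribution equals the corresponding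
abstract reward distribution), yet `α` of an optimal base action is not optimal in
the abstract bandit. -/
theorem stmt_3 :
    ∃ (p : Fin 2 → Fin 3 → ℝ) (q : Fin 2 → Fin 2 → ℝ)
      (v : Fin 3 → ℝ) (w : Fin 2 → ℝ) (αY : Fin 3 → Fin 2) (α : Fin 2 ≃ Fin 2),
      (∀ a, (∀ y, 0 ≤ p a y) ∧ ∑ y, p a y = 1) ∧
      (∀ a, (∀ y, 0 ≤ q a y) ∧ ∑ y, q a y = 1) ∧
      Function.Surjective αY ∧
      -- exactness: the abstract reward distribution is the pushforward of the base one
      (∀ a y', q (α a) y' = ∑ y ∈ univ.filter (fun y => αY y = y'), p a y) ∧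
      ∃ astar : Fin 2,
        (∀ a, ∑ y, p a y * v y ≤ ∑ y, p astar y * v y) ∧
        ¬ (∀ b, ∑ y', q b y' * w y' ≤ ∑ y', q (α astar) y' * w y') := by
  refine ⟨![![1,0,0], ![0,0,1]], ![![1,0], ![0,1]], ![1,0,0], ![0,1],
    ![0,0,1], Equiv.refl _, ?_, ?_, ?_, ?_, 0, ?_, ?_⟩
  · intro a; fin_cases a <;>
      refine ⟨fun y => by fin_cases y <;> norm_num, by simp [Fin.sum_univ_three]⟩
  · intro a; fin_cases a <;>
      refine ⟨fun y => by fin_cases y <;> norm_num, by simp [Fin.sum_univ_two]⟩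
  · intro y'; fin_cases y'
    · exact ⟨0, rfl⟩
    · exact ⟨2, rfl⟩
  · intro a y'; fin_cases a <;> fin_cases y' <;> rw [Finset.sum_filter] <;> simp [Fin.sum_univ_three]
  · intro a; fin_cases a <;> simp [Fin.sum_univ_three]
  · intro h
    have := h 1
    norm_num [Fin.sum_univ_two] at this
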